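/- arXiv:2302.06297 — 3 statements merged into one kernel-verified Lean document; each statement's English description precedes it below -/
import Mathlib

section
/- If K_β(β) has closed range, then the reproducing kernel of the subspace H_β = {g ∈ H : g(β) = 0} is K_ξ^β(z) = K_ξ(z) − K_β(z) K_β(β)^† K_ξ(β), where K_β(β)^† is the Moore–Penrose inverse; moreover the orthogonal projection of H onto H_β^⊥ is g ↦ K_β K_β(β)^† g(β), and H_β^⊥ = {K_β u : u ∈ X}. -/
/-!
Write `T = δ β` and `A = T T†`. From `A K A = A`, the operator `1 - A K` annihilates the range
of `A`; and any `Q` with `Q T T† = 0` satisfies `Q T = 0`, since `(Q T)(Q T)† = Q (T T†) Q† = 0`.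
Hence `T T† K T = T`, so `g ↦ T† K T g` splits `g` into a part in `ker T` and a part in
`range T† ⊆ (ker T)ᗮ`, which forces `(ker T)ᗮ = range T†`.
-/

namespace ContinuousLinearMap

variable {𝕜 E F G : Type*} [RCLike 𝕜]
  [NormedAddCommGroup E] [InnerProductSpace 𝕜 E] [CompleteSpace E]
  [NormedAddCommGroup F] [InnerProductSpace 𝕜 F] [CompleteSpace F]
  [NormedAddCommGroup G] [InnerProductSpace 𝕜 G] [CompleteSpace G]

theorem comp_eq_zero_of_comp_self_comp_adjoint_eq_zero {Q : F →L[𝕜] G} {T : E →L[𝕜] F}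
    (h : Q ∘L (T ∘L adjoint T) = 0) : Q ∘L T = 0 := by
  have : adjoint (adjoint (Q ∘L T)) ∘L adjoint (Q ∘L T) = 0 := by
    rw [adjoint_adjoint, adjoint_comp, ← comp_assoc, comp_assoc Q, h, zero_comp]
  rw [← adjoint_adjoint (Q ∘L T), adjoint_comp_self_eq_zero_iff.mp this, map_zero]

theorem adjoint_apply_mem_orthogonal_ker (T : E →L[𝕜] F) (y : F) : adjoint T y ∈ T.kerᗮ := by
  rw [orthogonal_ker]
  exact Submodule.le_topologicalClosure _ ⟨y, rfl⟩

section GeneralizedInverse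

variable {T : E →L[𝕜] F} {K : F →L[𝕜] F}
  (hK : (T ∘L adjoint T) ∘L K ∘L (T ∘L adjoint T) = T ∘L adjoint T)
include hK

theorem apply_adjoint_apply_apply_of_comp_comp_eq (x : E) : T (adjoint T (K (T x))) = T x := by
  have hQ : (1 - (T ∘L adjoint T) ∘L K) ∘L T = 0 :=
    comp_eq_zero_of_comp_self_comp_adjoint_eq_zero <| by
      rw [sub_comp, comp_assoc, hK]
      exact sub_eq_zero.mpr (one_mul _)
  have hx := congr($hQ x)
  simp only [sub_comp, sub_apply, comp_apply, zero_apply, sub_eq_zero] at hx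
  exact hx.symm

theorem sub_adjoint_apply_mem_ker_of_comp_comp_eq (x : E) :
    x - adjoint T (K (T x)) ∈ T.ker := by
  simp [apply_adjoint_apply_apply_of_comp_comp_eq hK]

theorem orthogonal_ker_eq_range_adjoint_of_comp_comp_eq : T.kerᗮ = (adjoint T).range := by
  refine le_antisymm (fun x hx => ?_) ?_
  · refine ⟨K (T x), ?_⟩
    have hzero : x - adjoint T (K (T x)) ∈ T.ker ⊓ T.kerᗮ :=
      ⟨sub_adjoint_apply_mem_ker_of_comp_comp_eq hK x,
        Submodule.sub_mem _ hx (adjoint_apply_mem_orthogonal_ker T _)⟩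
    rw [T.ker.inf_orthogonal_eq_bot, Submodule.mem_bot, sub_eq_zero] at hzero
    exact hzero.symm
  · rintro _ ⟨y, rfl⟩
    exact adjoint_apply_mem_orthogonal_ker T y

end GeneralizedInverse

end ContinuousLinearMap

theorem subspace_kernel_moore_penrose_general
    {X H : Type*} [NormedAddCommGroup X] [InnerProductSpace ℂ X] [CompleteSpace X]
    [NormedAddCommGroup H] [InnerProductSpace ℂ H] [CompleteSpace H]
    (δ : ℂ → H →L[ℂ] X)
    (β : ℂ)
    (Kd : X →L[ℂ] X)
    (hmp1 : ((δ β) ∘L (ContinuousLinearMap.adjoint (δ β))) ∘L Kd ∘L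
        ((δ β) ∘L (ContinuousLinearMap.adjoint (δ β))) =
      (δ β) ∘L (ContinuousLinearMap.adjoint (δ β))) :
    (∀ (ξ : ℂ) (u : X),
      δ β ((ContinuousLinearMap.adjoint (δ ξ)) u -
          (ContinuousLinearMap.adjoint (δ β)) (Kd (δ β ((ContinuousLinearMap.adjoint (δ ξ)) u)))) = 0 ∧
      ∀ f : H, δ β f = 0 →
        (inner ℂ f ((ContinuousLinearMap.adjoint (δ ξ)) u -
          (ContinuousLinearMap.adjoint (δ β)) (Kd (δ β ((ContinuousLinearMap.adjoint (δ ξ)) u)))) : ℂ)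
          = inner ℂ (δ ξ f) u) ∧
    (∀ g : H,
      g - (ContinuousLinearMap.adjoint (δ β)) (Kd (δ β g)) ∈ LinearMap.ker ((δ β : H →L[ℂ] X) : H →ₗ[ℂ] X) ∧
      (ContinuousLinearMap.adjoint (δ β)) (Kd (δ β g)) ∈ (LinearMap.ker ((δ β : H →L[ℂ] X) : H →ₗ[ℂ] X))ᗮ) ∧
    ((LinearMap.ker ((δ β : H →L[ℂ] X) : H →ₗ[ℂ] X))ᗮ = LinearMap.range ((ContinuousLinearMap.adjoint (δ β) : X →L[ℂ] H) : X →ₗ[ℂ] H)) := by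
  have hproj (g : H) := ContinuousLinearMap.sub_adjoint_apply_mem_ker_of_comp_comp_eq hmp1 g
  have hperp (y : X) := ContinuousLinearMap.adjoint_apply_mem_orthogonal_ker (δ β) y
  refine ⟨fun ξ u => ⟨hproj _, fun f hf => ?_⟩, fun g => ⟨hproj g, hperp _⟩,
    ContinuousLinearMap.orthogonal_ker_eq_range_adjoint_of_comp_comp_eq hmp1⟩
  have hf_perp : inner ℂ f (ContinuousLinearMap.adjoint (δ β)
      (Kd (δ β (ContinuousLinearMap.adjoint (δ ξ) u)))) = 0 :=
    Submodule.inner_right_of_mem_orthogonal hf (hperp _)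
  rw [inner_sub_right, hf_perp, sub_zero, ContinuousLinearMap.adjoint_inner_right]

/-- **Reproducing kernel of the subspace `H_β` via the Moore–Penrose inverse.**
Let `H` be an RKHS of `X`-valued entire functions with bounded point
evaluations `δ_z` and kernel `K_ξ(z) = δ_z δ_ξ^*`, and suppose `K_β(β)` has
closed range with Moore–Penrose inverse `Kd`. Then:
(1) the reproducing kernel of `H_β = {g : g(β) = 0}` is
`K_ξ^β(z) = K_ξ(z) − K_β(z) Kd K_ξ(β)` (here: its kernel functions lie in
`H_β` and reproduce there);
(2) the orthogonal projection of `H` onto `H_β^⊥` is `g ↦ K_β Kd g(β)`;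
(3) `H_β^⊥ = {K_β u : u ∈ X}`. -/
theorem subspace_kernel_moore_penrose
    {X H : Type*} [NormedAddCommGroup X] [InnerProductSpace ℂ X] [CompleteSpace X]
    [TopologicalSpace.SeparableSpace X]
    [NormedAddCommGroup H] [InnerProductSpace ℂ H] [CompleteSpace H]
    (δ : ℂ → H →L[ℂ] X)
    (hent : ∀ f : H, Differentiable ℂ fun z => δ z f)
    (β : ℂ)
    (hclosed : IsClosed
      ((LinearMap.range (((δ β) ∘L (ContinuousLinearMap.adjoint (δ β)) : X →L[ℂ] X) : X →ₗ[ℂ] X) : Submodule ℂ X) : Set X))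
    (Kd : X →L[ℂ] X)
    (hmp1 : ((δ β) ∘L (ContinuousLinearMap.adjoint (δ β))) ∘L Kd ∘L
        ((δ β) ∘L (ContinuousLinearMap.adjoint (δ β))) =
      (δ β) ∘L (ContinuousLinearMap.adjoint (δ β)))
    (hmp2 : Kd ∘L ((δ β) ∘L (ContinuousLinearMap.adjoint (δ β))) ∘L Kd = Kd)
    (hmp3 : IsSelfAdjoint (((δ β) ∘L (ContinuousLinearMap.adjoint (δ β))) ∘L Kd))
    (hmp4 : IsSelfAdjoint (Kd ∘L ((δ β) ∘L (ContinuousLinearMap.adjoint (δ β))))) :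
    (∀ (ξ : ℂ) (u : X),
      δ β ((ContinuousLinearMap.adjoint (δ ξ)) u -
          (ContinuousLinearMap.adjoint (δ β)) (Kd (δ β ((ContinuousLinearMap.adjoint (δ ξ)) u)))) = 0 ∧
      ∀ f : H, δ β f = 0 →
        (inner ℂ f ((ContinuousLinearMap.adjoint (δ ξ)) u -
          (ContinuousLinearMap.adjoint (δ β)) (Kd (δ β ((ContinuousLinearMap.adjoint (δ ξ)) u)))) : ℂ)
          = inner ℂ (δ ξ f) u) ∧
    (∀ g : H,
      g - (ContinuousLinearMap.adjoint (δ β)) (Kd (δ β g)) ∈ LinearMap.ker ((δ β : H →L[ℂ] X) : H →ₗ[ℂ] X) ∧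
      (ContinuousLinearMap.adjoint (δ β)) (Kd (δ β g)) ∈ (LinearMap.ker ((δ β : H →L[ℂ] X) : H →ₗ[ℂ] X))ᗮ) ∧
    ((LinearMap.ker ((δ β : H →L[ℂ] X) : H →ₗ[ℂ] X))ᗮ = LinearMap.range ((ContinuousLinearMap.adjoint (δ β) : X →L[ℂ] H) : X →ₗ[ℂ] H)) :=
  subspace_kernel_moore_penrose_general δ β Kd hmp1
end

section
/- If the backward shift R_β maps H_β into H, then R_β : H_β → H is a bounded operator (by the closed graph theorem), H_β = rng(T − βI) where T is multiplication by the independent variable with domain D = {g ∈ H : Tg ∈ H}, and (T − βI) R_β g = g for every g ∈ H_β. -/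
/-! On `H_β` the backward shift is forced pointwise off `β`: `(R g)(z) = g(z)/(z − β)`.
Evaluations at the points `z ≠ β` still separate `H`, since elements of `H` are continuous
functions and `ℂ \ {β}` is dense; so the graph of `R` on the closed subspace `H_β` is an
intersection of closed sets, and the closed graph theorem makes it bounded. The identity
`(z − β) (R g)(z) = g(z)` exhibits every `g ∈ H_β` as `(T − β) R g`, and conversely anything of
the form `(z − β) h(z)` vanishes at `β`. -/

theorem LinearMap.continuous_of_separating_continuous_comp
    {𝕜 E F G ι : Type*} [NontriviallyNormedField 𝕜]
    [NormedAddCommGroup E] [NormedSpace 𝕜 E] [CompleteSpace E]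
    [NormedAddCommGroup F] [NormedSpace 𝕜 F] [CompleteSpace F]
    [TopologicalSpace G] [T2Space G] [AddCommMonoid G] [Module 𝕜 G]
    (L : E →ₗ[𝕜] F) (φ : ι → F →L[𝕜] G) (hsep : ∀ x y, (∀ i, φ i x = φ i y) → x = y)
    (hφL : ∀ i, Continuous fun x => φ i (L x)) : Continuous L := by
  refine L.continuous_of_isClosed_graph ?_
  have hgraph : (L.graph : Set (E × F)) = ⋂ i, {p | φ i p.2 = φ i (L p.1)} := by
    ext p
    simp only [SetLike.mem_coe, LinearMap.mem_graph_iff, Set.mem_iInter, Set.mem_ofPred_eq]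
    exact ⟨fun h i => h ▸ rfl, hsep _ _⟩
  rw [hgraph]
  exact isClosed_iInter fun i =>
    isClosed_eq ((φ i).continuous.comp continuous_snd) ((hφL i).comp continuous_fst)

section Evaluation

variable {X H : Type*} [NormedAddCommGroup X] [NormedSpace ℂ X]
  [NormedAddCommGroup H] [NormedSpace ℂ H]

theorem eq_of_forall_ne_eval_eq (δ : ℂ → H →L[ℂ] X)
    (hinj : ∀ f g : H, (∀ z : ℂ, δ z f = δ z g) → f = g)
    (hcont : ∀ f : H, Continuous fun z => δ z f) (β : ℂ) (f g : H)
    (hfg : ∀ z : ℂ, z ≠ β → δ z f = δ z g) : f = g :=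
  hinj f g <| congrFun <| Continuous.ext_on (dense_compl_singleton β) (hcont f) (hcont g) hfg

theorem sub_smul_eval_backwardShift (δ : ℂ → H →L[ℂ] X) (β : ℂ) (R : H →ₗ[ℂ] H)
    (hR : ∀ g : H, δ β g = 0 → ∀ z : ℂ, z ≠ β → δ z (R g) = (z - β)⁻¹ • δ z g)
    (g : H) (hg : δ β g = 0) (z : ℂ) : (z - β) • δ z (R g) = δ z g := by
  rcases eq_or_ne z β with rfl | hz
  · simp [hg]
  · rw [hR g hg z hz, smul_smul, mul_inv_cancel₀ (sub_ne_zero.2 hz), one_smul]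

theorem exists_bound_backwardShift [CompleteSpace H] (δ : ℂ → H →L[ℂ] X)
    (hinj : ∀ f g : H, (∀ z : ℂ, δ z f = δ z g) → f = g)
    (hcont : ∀ f : H, Continuous fun z => δ z f) (β : ℂ) (R : H →ₗ[ℂ] H)
    (hR : ∀ g : H, δ β g = 0 → ∀ z : ℂ, z ≠ β → δ z (R g) = (z - β)⁻¹ • δ z g) :
    ∃ C : ℝ, ∀ g : H, δ β g = 0 → ‖R g‖ ≤ C * ‖g‖ := by
  let K : Submodule ℂ H := LinearMap.ker (δ β : H →ₗ[ℂ] X)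
  have : CompleteSpace K := (ContinuousLinearMap.isClosed_ker (δ β)).completeSpace_coe
  let L : K →ₗ[ℂ] H := R ∘ₗ K.subtype
  have hL : Continuous L := by
    refine L.continuous_of_separating_continuous_comp (fun z : {z : ℂ // z ≠ β} => δ z)
      (fun f g hfg => eq_of_forall_ne_eval_eq δ hinj hcont β f g fun z hz => hfg ⟨z, hz⟩) ?_
    rintro ⟨z, hz⟩
    have hLz : (fun g : K => δ z (L g)) = fun g : K => (z - β)⁻¹ • δ z (g : H) :=
      funext fun g => hR g g.2 z hz
    rw [hLz]
    fun_prop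
  exact ⟨‖(⟨L, hL⟩ : K →L[ℂ] H)‖, fun g hg => (⟨L, hL⟩ : K →L[ℂ] H).le_opNorm ⟨g, hg⟩⟩

end Evaluation

theorem backward_shift_bounded_and_range_general
    {X H : Type*} [NormedAddCommGroup X] [InnerProductSpace ℂ X]
    [NormedAddCommGroup H] [InnerProductSpace ℂ H] [CompleteSpace H]
    (δ : ℂ → H →L[ℂ] X)
    (hinj : ∀ f g : H, (∀ z : ℂ, δ z f = δ z g) → f = g)
    (hent : ∀ f : H, Differentiable ℂ fun z => δ z f)
    (β : ℂ)
    (R : H →ₗ[ℂ] H)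
    (hR : ∀ g : H, δ β g = 0 → ∀ z : ℂ, z ≠ β → δ z (R g) = (z - β)⁻¹ • δ z g) :
    (∃ C : ℝ, ∀ g : H, δ β g = 0 → ‖R g‖ ≤ C * ‖g‖) ∧
    (∀ g : H, δ β g = 0 ↔ ∃ h : H, ∀ z : ℂ, δ z g = (z - β) • δ z h) ∧
    (∀ g : H, δ β g = 0 → ∀ z : ℂ, (z - β) • δ z (R g) = δ z g) := by
  have hshift := sub_smul_eval_backwardShift δ β R hR
  refine ⟨exists_bound_backwardShift δ hinj (fun f => (hent f).continuous) β R hR,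
    fun g => ⟨fun hg => ⟨R g, fun z => (hshift g hg z).symm⟩, ?_⟩, hshift⟩
  rintro ⟨h, hh⟩
  simp [hh β]

/-- **Boundedness of the backward shift and `H_β = rng(T − βI)`.**
Let `H` be an RKHS of `X`-valued entire functions (bounded point evaluations
`δ_z`, realizing `H` injectively as a space of entire functions), and let
`R = R_β` be the generalized backward shift, assumed to map
`H_β = {g : g(β) = 0}` into `H`. Then `R_β : H_β → H` is a bounded operator,
`H_β = rng(T − βI)` where `T` is multiplication by the independent variable on
its natural domain, and `(T − βI) R_β g = g` for every `g ∈ H_β`. -/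
theorem backward_shift_bounded_and_range
    {X H : Type*} [NormedAddCommGroup X] [InnerProductSpace ℂ X] [CompleteSpace X]
    [TopologicalSpace.SeparableSpace X]
    [NormedAddCommGroup H] [InnerProductSpace ℂ H] [CompleteSpace H]
    (δ : ℂ → H →L[ℂ] X)
    (hinj : ∀ f g : H, (∀ z : ℂ, δ z f = δ z g) → f = g)
    (hent : ∀ f : H, Differentiable ℂ fun z => δ z f)
    (β : ℂ)
    (R : H →ₗ[ℂ] H)
    (hR : ∀ g : H, δ β g = 0 → ∀ z : ℂ, z ≠ β → δ z (R g) = (z - β)⁻¹ • δ z g) :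
    (∃ C : ℝ, ∀ g : H, δ β g = 0 → ‖R g‖ ≤ C * ‖g‖) ∧
    (∀ g : H, δ β g = 0 ↔ ∃ h : H, ∀ z : ℂ, δ z g = (z - β) • δ z h) ∧
    (∀ g : H, δ β g = 0 → ∀ z : ℂ, (z - β) • δ z (R g) = δ z g) :=
  backward_shift_bounded_and_range_general δ hinj hent β R hR
end

section
/- Let β ∈ ℂ₊ with K_β(β), K_{β̄}(β̄) having closed range, and suppose R_β H_β ⊆ H and R_{β̄} H_{β̄} ⊆ H. Then the operator (T − β̄ I) R_β : H_β → H_{β̄} is an isometric isomorphism if and only if the multiplication operator T is symmetric on its domain D. -/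
/-!
For `u ∈ D` the operator `S = (T − β̄I)R_β` sends `Tu − βu ∈ H_β` to `Tu − β̄u`, and every
`g ∈ H_β` (resp. `h ∈ H_β̄`) has this form `Tu − βu` (resp. `Tu − β̄u`) with `u = R_β g`
(resp. `u = R_β̄ h`); the latter gives surjectivity outright. Since
`‖Tu − β̄u‖² − ‖Tu − βu‖² = (β − β̄)(⟪Tu, u⟫ − ⟪u, Tu⟫)` and `β ≠ β̄`, `S` is isometric exactly
when `⟪Tu, u⟫ = ⟪u, Tu⟫` on `D`, which by complex polarization is the symmetry of `T`.
-/

open ComplexConjugate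
open scoped InnerProductSpace

theorem Submodule.inner_snd_fst_eq_of_forall_mem {E : Type*} [NormedAddCommGroup E]
    [InnerProductSpace ℂ E] (G : Submodule ℂ (E × E))
    (hG : ∀ p ∈ G, ⟪p.2, p.1⟫_ℂ = ⟪p.1, p.2⟫_ℂ) {p q : E × E} (hp : p ∈ G) (hq : q ∈ G) :
    ⟪p.2, q.1⟫_ℂ = ⟪p.1, q.2⟫_ℂ := by
  have hadd := hG _ (G.add_mem hp hq)
  have hI := hG _ (G.add_mem hp (G.smul_mem Complex.I hq))
  simp only [Prod.fst_add, Prod.snd_add, Prod.smul_fst, Prod.smul_snd, inner_add_left,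
    inner_add_right, inner_smul_left, inner_smul_right, Complex.conj_I, mul_add, ← mul_assoc,
    mul_neg, Complex.I_mul_I, neg_neg, one_mul] at hadd hI
  have hI' : ⟪p.2, q.1⟫_ℂ - ⟪q.2, p.1⟫_ℂ = ⟪p.1, q.2⟫_ℂ - ⟪q.1, p.2⟫_ℂ :=
    mul_left_cancel₀ Complex.I_ne_zero (by linear_combination hI - hG p hp - hG q hq)
  linear_combination (hadd - hG p hp - hG q hq + hI') / 2

theorem norm_sub_conj_smul_eq_norm_sub_smul_iff {E : Type*} [NormedAddCommGroup E]
    [InnerProductSpace ℂ E] {β : ℂ} (hβ : conj β ≠ β) (x y : E) :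
    ‖y - conj β • x‖ = ‖y - β • x‖ ↔ ⟪y, x⟫_ℂ = ⟪x, y⟫_ℂ := by
  have hsub : β - conj β ≠ 0 := sub_ne_zero.mpr hβ.symm
  have hnorm (a b : E) : ‖a‖ = ‖b‖ ↔ ⟪a, a⟫_ℂ = ⟪b, b⟫_ℂ := by
    rw [inner_self_eq_norm_sq_to_K, inner_self_eq_norm_sq_to_K]
    norm_cast
    rw [sq_eq_sq₀ (norm_nonneg _) (norm_nonneg _)]
  rw [hnorm]
  simp only [inner_sub_left, inner_sub_right, inner_smul_left, inner_smul_right,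
    Complex.conj_conj]
  constructor
  · intro h
    exact mul_left_cancel₀ hsub (by linear_combination h)
  · intro h
    linear_combination (β - conj β) * h

section

variable {X H : Type*} [NormedAddCommGroup X] [InnerProductSpace ℂ X]
  [NormedAddCommGroup H] [InnerProductSpace ℂ H]

theorem eq_of_eval_eq_off_countable {δ : ℂ → H →L[ℂ] X}
    (hinj : ∀ f g : H, (∀ z : ℂ, δ z f = δ z g) → f = g)
    (hcont : ∀ f : H, Continuous fun z => δ z f)
    {s : Set ℂ} (hs : s.Countable) {f g : H} (hfg : ∀ z ∉ s, δ z f = δ z g) : f = g :=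
  hinj f g <| congrFun <| Continuous.ext_on (hs.dense_compl ℂ) (hcont f) (hcont g) hfg

/-- The graph of `T`; its first projection is the domain `D`. -/
def mulVarGraph (δ : ℂ → H →L[ℂ] X) : Submodule ℂ (H × H) where
  carrier := {p | ∀ z, δ z p.2 = z • δ z p.1}
  add_mem' {p q} hp hq z := by
    simp only [Prod.fst_add, Prod.snd_add, map_add, hp z, hq z, smul_add]
  zero_mem' z := by simp
  smul_mem' c p hp z := by
    simp only [Prod.smul_fst, Prod.smul_snd, map_smul, hp z, smul_comm c z]

theorem mk_mem_mulVarGraph_of_backwardShift {δ : ℂ → H →L[ℂ] X} {a : ℂ} {R : H →ₗ[ℂ] H}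
    (hR : ∀ g : H, δ a g = 0 → ∀ z : ℂ, z ≠ a → δ z (R g) = (z - a)⁻¹ • δ z g)
    {g : H} (hg : δ a g = 0) : (R g, g + a • R g) ∈ mulVarGraph δ := by
  intro z
  rcases eq_or_ne z a with rfl | hz
  · simp [hg]
  · rw [map_add, map_smul, hR g hg z hz]
    match_scalars
    field_simp [sub_ne_zero.mpr hz]
    ring

theorem map_snd_sub_smul_fst_of_mem_mulVarGraph {δ : ℂ → H →L[ℂ] X}
    (hinj : ∀ f g : H, (∀ z : ℂ, δ z f = δ z g) → f = g)
    (hcont : ∀ f : H, Continuous fun z => δ z f) {a b : ℂ} {S : H →ₗ[ℂ] H}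
    (hS : ∀ g : H, δ a g = 0 → ∀ z : ℂ, z ≠ a → δ z (S g) = ((z - b) / (z - a)) • δ z g)
    {p : H × H} (hp : p ∈ mulVarGraph δ) :
    δ a (p.2 - a • p.1) = 0 ∧ S (p.2 - a • p.1) = p.2 - b • p.1 := by
  have hp0 : δ a (p.2 - a • p.1) = 0 := by simp [hp a]
  refine ⟨hp0, eq_of_eval_eq_off_countable hinj hcont (Set.countable_singleton a) ?_⟩
  intro z hz
  rw [hS _ hp0 z hz, map_sub, map_sub, map_smul, map_smul, hp z]
  match_scalars
  field_simp [sub_ne_zero.mpr hz]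

end

theorem isometric_isomorphism_iff_symmetric_general
    {X H : Type*} [NormedAddCommGroup X] [InnerProductSpace ℂ X]
    [NormedAddCommGroup H] [InnerProductSpace ℂ H]
    (δ : ℂ → H →L[ℂ] X)
    (hinj : ∀ f g : H, (∀ z : ℂ, δ z f = δ z g) → f = g)
    (hent : ∀ f : H, Differentiable ℂ fun z => δ z f)
    (β : ℂ) (hβ : 0 < β.im)
    (Rb : H →ₗ[ℂ] H)
    (hRb : ∀ g : H, δ β g = 0 → ∀ z : ℂ, z ≠ β → δ z (Rb g) = (z - β)⁻¹ • δ z g)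
    (Rbb : H →ₗ[ℂ] H)
    (hRbb : ∀ g : H, δ ((starRingEnd ℂ) β) g = 0 → ∀ z : ℂ, z ≠ (starRingEnd ℂ) β →
      δ z (Rbb g) = (z - (starRingEnd ℂ) β)⁻¹ • δ z g)
    (S : H →ₗ[ℂ] H)
    (hS : ∀ g : H, δ β g = 0 → ∀ z : ℂ, z ≠ β →
      δ z (S g) = ((z - (starRingEnd ℂ) β) / (z - β)) • δ z g) :
    ((∀ g : H, δ β g = 0 → δ ((starRingEnd ℂ) β) (S g) = 0 ∧ ‖S g‖ = ‖g‖) ∧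
      (∀ h : H, δ ((starRingEnd ℂ) β) h = 0 → ∃ g : H, δ β g = 0 ∧ S g = h)) ↔
    (∀ g h g' h' : H, (∀ z : ℂ, δ z g' = z • δ z g) → (∀ z : ℂ, δ z h' = z • δ z h) →
      (inner ℂ g' h : ℂ) = inner ℂ g h') := by
  have hβ' : conj β ≠ β := fun h => by
    have := congrArg Complex.im h
    rw [Complex.conj_im] at this
    linarith
  have hSgraph {p : H × H} (hp : p ∈ mulVarGraph δ) :=
    map_snd_sub_smul_fst_of_mem_mulVarGraph hinj (fun f => (hent f).continuous) hS hp
  constructor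
  · rintro ⟨hiso, -⟩ g h g' h' hg hh
    refine (mulVarGraph δ).inner_snd_fst_eq_of_forall_mem (fun p hp => ?_)
      (p := (g, g')) (q := (h, h')) hg hh
    obtain ⟨hp0, hSp⟩ := hSgraph hp
    rw [← norm_sub_conj_smul_eq_norm_sub_smul_iff hβ', ← hSp]
    exact (hiso _ hp0).2
  · intro hsym
    refine ⟨fun g hg => ⟨by simp [hS g hg _ hβ'], ?_⟩, fun h hh => ?_⟩
    · have hp := mk_mem_mulVarGraph_of_backwardShift hRb hg
      obtain ⟨-, hSp⟩ := hSgraph hp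
      rw [add_sub_cancel_right] at hSp
      rw [hSp, (norm_sub_conj_smul_eq_norm_sub_smul_iff hβ' _ _).2 (hsym _ _ _ _ hp hp),
        add_sub_cancel_right]
    · obtain ⟨hp0, hSp⟩ := hSgraph (mk_mem_mulVarGraph_of_backwardShift hRbb hh)
      exact ⟨_, hp0, hSp.trans (add_sub_cancel_right _ _)⟩

/-- **`(T − β̄I)R_β` is an isometric isomorphism iff `T` is symmetric.**
Let `H` be a nonzero RKHS of `X`-valued entire functions with bounded point
evaluations `δ_z`, let `β ∈ ℂ₊` with `K_β(β)` and `K_β̄(β̄)` of closed range,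
and suppose the backward shifts `R_β, R_β̄` map `H_β, H_β̄` into `H`. Let `S`
act on `H_β` as `(T − β̄I)R_β`, i.e. `(Sg)(z) = ((z − β̄)/(z − β)) g(z)`. Then
`S : H_β → H_β̄` is an isometric isomorphism if and only if the multiplication
operator `T` is symmetric on its domain `D = {g ∈ H : Tg ∈ H}`. -/
theorem isometric_isomorphism_iff_symmetric
    {X H : Type*} [NormedAddCommGroup X] [InnerProductSpace ℂ X] [CompleteSpace X]
    [TopologicalSpace.SeparableSpace X]
    [NormedAddCommGroup H] [InnerProductSpace ℂ H] [CompleteSpace H] [Nontrivial H]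
    (δ : ℂ → H →L[ℂ] X)
    (hinj : ∀ f g : H, (∀ z : ℂ, δ z f = δ z g) → f = g)
    (hent : ∀ f : H, Differentiable ℂ fun z => δ z f)
    (β : ℂ) (hβ : 0 < β.im)
    (hcl1 : IsClosed
      ((LinearMap.range (((δ β) ∘L (ContinuousLinearMap.adjoint (δ β)) : X →L[ℂ] X) : X →ₗ[ℂ] X) : Submodule ℂ X) : Set X))
    (hcl2 : IsClosed
      ((LinearMap.range (((δ ((starRingEnd ℂ) β)) ∘L
        (ContinuousLinearMap.adjoint (δ ((starRingEnd ℂ) β))) : X →L[ℂ] X) : X →ₗ[ℂ] X) : Submodule ℂ X) : Set X))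
    (Rb : H →ₗ[ℂ] H)
    (hRb : ∀ g : H, δ β g = 0 → ∀ z : ℂ, z ≠ β → δ z (Rb g) = (z - β)⁻¹ • δ z g)
    (Rbb : H →ₗ[ℂ] H)
    (hRbb : ∀ g : H, δ ((starRingEnd ℂ) β) g = 0 → ∀ z : ℂ, z ≠ (starRingEnd ℂ) β →
      δ z (Rbb g) = (z - (starRingEnd ℂ) β)⁻¹ • δ z g)
    (S : H →ₗ[ℂ] H)
    (hS : ∀ g : H, δ β g = 0 → ∀ z : ℂ, z ≠ β →
      δ z (S g) = ((z - (starRingEnd ℂ) β) / (z - β)) • δ z g) :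
    ((∀ g : H, δ β g = 0 → δ ((starRingEnd ℂ) β) (S g) = 0 ∧ ‖S g‖ = ‖g‖) ∧
      (∀ h : H, δ ((starRingEnd ℂ) β) h = 0 → ∃ g : H, δ β g = 0 ∧ S g = h)) ↔
    (∀ g h g' h' : H, (∀ z : ℂ, δ z g' = z • δ z g) → (∀ z : ℂ, δ z h' = z • δ z h) →
      (inner ℂ g' h : ℂ) = inner ℂ g h') :=
  isometric_isomorphism_iff_symmetric_general δ hinj hent β hβ Rb hRb Rbb hRbb S hS
end
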